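/- arXiv:2006.06555 — 7 statements merged into one kernel-verified Lean document; each statement's English description precedes it below -/
import Mathlib

section
/- Let m be a positive integer and 0 < ν < 1 a constant. For all real k ≥ 2m / ln(1/ν), the infinite sum ∑_{i=0}^∞ (k + i)^m ν^i is at most k^m / (1 - √ν). -/
/-!
Since `1 + x ≤ eˣ`, each term satisfies `(k + i)^m ≤ k^m e^{m i / k}`, so the series is dominated
by the geometric series `k^m ∑ (e^{m/k} ν)^i`. The hypothesis on `k` says exactly that
`e^{2m/k} ≤ 1/ν`, i.e. that the ratio `e^{m/k} ν` is at most `√ν`.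
-/

open Real

lemma tsum_le_div_one_sub_of_le_geometric {f : ℕ → ℝ} {C r : ℝ} (hf₀ : ∀ i, 0 ≤ f i)
    (hf : ∀ i, f i ≤ C * r ^ i) (hr₀ : 0 ≤ r) (hr₁ : r < 1) :
    ∑' i, f i ≤ C / (1 - r) := by
  have hgeom : HasSum (fun i ↦ C * r ^ i) (C / (1 - r)) :=
    (hasSum_geometric_of_lt_one hr₀ hr₁).mul_left C
  exact hasSum_le hf (hgeom.summable.of_nonneg_of_le hf₀ hf).hasSum hgeom

lemma add_le_mul_exp_div {k : ℝ} (hk : 0 < k) (x : ℝ) : k + x ≤ k * exp (x / k) := by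
  calc k + x = k * (x / k + 1) := by field_simp; ring
    _ ≤ k * exp (x / k) := by gcongr; exact add_one_le_exp _

lemma add_natCast_pow_le_pow_mul_exp_pow {k : ℝ} (hk : 0 < k) (m i : ℕ) :
    (k + i) ^ m ≤ k ^ m * exp (m / k) ^ i := by
  calc (k + i) ^ m ≤ (k * exp (i / k)) ^ m := by gcongr; exact add_le_mul_exp_div hk i
    _ = k ^ m * exp (m / k) ^ i := by
        rw [mul_pow, ← exp_nat_mul, ← exp_nat_mul]
        ring_nf

lemma exp_div_mul_le_sqrt {m k ν : ℝ} (hν : 0 < ν) (hk : 0 < k) (hmk : 2 * m ≤ k * log (1 / ν)) :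
    exp (m / k) * ν ≤ √ν := by
  have hexp : exp (m / k) ^ 2 ≤ 1 / ν := by
    rw [← exp_nat_mul, ← exp_log (one_div_pos.2 hν)]
    gcongr
    push_cast
    rwa [← mul_div_assoc, div_le_iff₀' hk]
  rw [le_sqrt (by positivity) hν.le]
  calc (exp (m / k) * ν) ^ 2 = exp (m / k) ^ 2 * ν * ν := by ring
    _ ≤ 1 / ν * ν * ν := by gcongr
    _ = ν := by field_simp

/-- For m a positive integer, 0 < ν < 1, and k ≥ 2m / ln(1/ν),
    ∑_{i=0}^∞ (k + i)^m ν^i ≤ k^m / (1 - √ν). -/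
theorem stmt_0 (m : ℕ) (hm : 0 < m) (ν : ℝ) (hν0 : 0 < ν) (hν1 : ν < 1)
    (k : ℝ) (hk : (2 * m) / Real.log (1 / ν) ≤ k) :
    ∑' i : ℕ, (k + (i : ℝ)) ^ m * ν ^ i ≤ k ^ m / (1 - Real.sqrt ν) := by
  have hlog : 0 < log (1 / ν) := log_pos (by rw [lt_div_iff₀ hν0]; linarith)
  have hk0 : 0 < k := (div_pos (by positivity) hlog).trans_le hk
  have hmk : 2 * (m : ℝ) ≤ k * log (1 / ν) := (div_le_iff₀ hlog).1 hk
  have hratio := exp_div_mul_le_sqrt hν0 hk0 hmk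
  refine tsum_le_div_one_sub_of_le_geometric (fun i ↦ by positivity) (fun i ↦ ?_) (sqrt_nonneg ν)
    ((sqrt_lt' one_pos).2 (by simpa using hν1))
  calc (k + i) ^ m * ν ^ i ≤ k ^ m * exp (m / k) ^ i * ν ^ i := by
        gcongr; exact add_natCast_pow_le_pow_mul_exp_pow hk0 m i
    _ = k ^ m * (exp (m / k) * ν) ^ i := by ring
    _ ≤ k ^ m * √ν ^ i := by gcongr
end

section
/- Suppose F : ℝ^N → ℝ^N is a γ-contraction in the weighted infinity norm ‖·‖_v, i.e., ‖F(x) - F(y)‖_v ≤ γ ‖x - y‖_v for all x, y ∈ ℝ^N with 0 ≤ γ < 1. Then the composite operator x ↦ Π F(Φ x) from ℝ^M to ℝ^M is also a γ-contraction in ‖·‖_v, and consequently has a unique fixed point x* ∈ ℝ^M satisfying Π F(Φ x*) = x*. -/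
/-!
Averaging over the fibres of `h` with positive weights moves no coordinate further than the
largest deviation inside its fibre, and on each fibre of `j` the weight `v (h i)` is just `v j`.
So `Π` is nonexpansive for `‖·‖_v`, while `x ↦ Φ x` is an isometry for it because `h` is
surjective; composing with `F` gives the contraction. Dividing by `v` identifies `‖·‖_v` with
the sup distance on `M → ℝ`, which is complete, so Banach's theorem applies.
-/

open Finset

section WeightedSup

variable {ι κ : Type*}

lemma dist_pi_eq_iSup {X : ι → Type*} [Fintype ι] [∀ i, PseudoMetricSpace (X i)]
    (f g : ∀ i, X i) : dist f g = ⨆ i, dist (f i) (g i) :=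
  le_antisymm
    ((dist_pi_le_iff (Real.iSup_nonneg fun _ => dist_nonneg)).2
      (Finite.le_ciSup fun i => dist (f i) (g i)))
    (Real.iSup_le (dist_le_pi_dist f g) dist_nonneg)

/-- The paper's `‖x - y‖_v`. -/
noncomputable def weightedSupDist (v x y : ι → ℝ) : ℝ := ⨆ i, |x i - y i| / v i

variable {v : ι → ℝ}

lemma weightedSupDist_nonneg (hv : ∀ i, 0 ≤ v i) (x y : ι → ℝ) :
    0 ≤ weightedSupDist v x y :=
  Real.iSup_nonneg fun i => div_nonneg (abs_nonneg _) (hv i)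

lemma abs_sub_le_weightedSupDist_mul [Finite ι] (hv : ∀ i, 0 < v i) (x y : ι → ℝ) (i : ι) :
    |x i - y i| ≤ weightedSupDist v x y * v i :=
  (div_le_iff₀ (hv i)).1 (Finite.le_ciSup (fun i => |x i - y i| / v i) i)

lemma weightedSupDist_le_of_forall {c : ℝ} (hv : ∀ i, 0 < v i) (hc : 0 ≤ c) {x y : ι → ℝ}
    (hxy : ∀ i, |x i - y i| ≤ c * v i) : weightedSupDist v x y ≤ c :=
  Real.iSup_le (fun i => (div_le_iff₀ (hv i)).2 (hxy i)) hc

lemma weightedSupDist_comp {h : κ → ι} (hh : Function.Surjective h) (x y : ι → ℝ) :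
    weightedSupDist (v ∘ h) (x ∘ h) (y ∘ h) = weightedSupDist v x y :=
  hh.iSup_comp fun i => |x i - y i| / v i

noncomputable def divWeight (v : ι → ℝ) (hv : ∀ i, v i ≠ 0) : (ι → ℝ) ≃ (ι → ℝ) where
  toFun x := x / v
  invFun u := u * v
  left_inv x := funext fun i => div_mul_cancel₀ (x i) (hv i)
  right_inv u := funext fun i => mul_div_cancel_right₀ (u i) (hv i)

lemma dist_divWeight [Fintype ι] (hv : ∀ i, 0 < v i) (x y : ι → ℝ) :
    dist (divWeight v (fun i => (hv i).ne') x) (divWeight v (fun i => (hv i).ne') y) =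
      weightedSupDist v x y := by
  rw [dist_pi_eq_iSup]
  refine iSup_congr fun i => ?_
  simp only [divWeight, Equiv.coe_fn_mk, Pi.div_apply, Real.dist_eq, ← sub_div, abs_div,
    abs_of_pos (hv i)]

theorem existsUnique_fixedPoint_of_weightedSupDist_le [Fintype ι] (hv : ∀ i, 0 < v i)
    {γ : ℝ} (hγ : γ < 1) {G : (ι → ℝ) → ι → ℝ}
    (hG : ∀ x y, weightedSupDist v (G x) (G y) ≤ γ * weightedSupDist v x y) :
    ∃! x, G x = x := by
  set e := divWeight v fun i => (hv i).ne'
  have hlip : LipschitzWith γ.toNNReal (e ∘ G ∘ e.symm) := by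
    refine LipschitzWith.of_dist_le_mul fun u w => ?_
    calc dist (e (G (e.symm u))) (e (G (e.symm w)))
        ≤ γ * weightedSupDist v (e.symm u) (e.symm w) := by rw [dist_divWeight hv]; exact hG _ _
      _ = γ * dist u w := by rw [← dist_divWeight hv, e.apply_symm_apply, e.apply_symm_apply]
      _ ≤ γ.toNNReal * dist u w :=
          mul_le_mul_of_nonneg_right (Real.le_coe_toNNReal γ) dist_nonneg
  have hC : ContractingWith γ.toNNReal (e ∘ G ∘ e.symm) := ⟨Real.toNNReal_lt_one.2 hγ, hlip⟩
  have hfix : ∃! u, Function.IsFixedPt (e ∘ G ∘ e.symm) u :=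
    ⟨_, hC.fixedPoint_isFixedPt, fun _ hu => hC.fixedPoint_unique hu⟩
  exact (e.symm.existsUnique_congr (q := fun x => G x = x) fun _ => e.eq_symm_apply.symm).1 hfix

end WeightedSup

lemma abs_div_sum_sub_div_sum_le {ι : Type*} {s : Finset ι} {w a b : ι → ℝ} {c : ℝ}
    (hw : ∀ i ∈ s, 0 ≤ w i) (hs : 0 < ∑ i ∈ s, w i) (hab : ∀ i ∈ s, |a i - b i| ≤ c) :
    |(∑ i ∈ s, w i * a i) / (∑ i ∈ s, w i) - (∑ i ∈ s, w i * b i) / ∑ i ∈ s, w i| ≤ c := by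
  rw [div_sub_div_same, abs_div, abs_of_pos hs, div_le_iff₀ hs, ← sum_sub_distrib, mul_sum]
  calc |∑ i ∈ s, (w i * a i - w i * b i)| ≤ ∑ i ∈ s, |w i * a i - w i * b i| :=
        abs_sum_le_sum_abs _ _
    _ ≤ ∑ i ∈ s, c * w i := sum_le_sum fun i hi => by
        rw [← mul_sub, abs_mul, abs_of_nonneg (hw i hi), mul_comm c]
        exact mul_le_mul_of_nonneg_left (hab i hi) (hw i hi)

theorem stmt_4_general {N M : Type*} [Fintype N] [Fintype M] [DecidableEq M]
    (h : N → M) (hsurj : Function.Surjective h)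
    (d : N → ℝ) (hd : ∀ i, 0 < d i)
    (v : M → ℝ) (hv : ∀ j, 0 < v j)
    (γ : ℝ) (hγ1 : γ < 1)
    (F : (N → ℝ) → (N → ℝ))
    (hF : ∀ x y : N → ℝ,
      (⨆ i, |F x i - F y i| / v (h i)) ≤ γ * ⨆ i, |x i - y i| / v (h i))
    (G : (M → ℝ) → (M → ℝ))
    (hG : ∀ x j, G x j =
      (∑ i ∈ Finset.univ.filter (fun i => h i = j), d i * F (fun i => x (h i)) i) /
      (∑ i ∈ Finset.univ.filter (fun i => h i = j), d i)) :
    (∀ x y : M → ℝ, (⨆ j, |G x j - G y j| / v j) ≤ γ * ⨆ j, |x j - y j| / v j) ∧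
    (∃! xstar : M → ℝ, G xstar = xstar) := by
  have hfiber : ∀ j, 0 < ∑ i ∈ univ.filter (fun i => h i = j), d i := fun j =>
    let ⟨i, hi⟩ := hsurj j
    sum_pos (fun i _ => hd i) ⟨i, mem_filter.2 ⟨mem_univ i, hi⟩⟩
  have hcontr : ∀ x y, weightedSupDist v (G x) (G y) ≤ γ * weightedSupDist v x y := by
    intro x y
    have hFxy : weightedSupDist (v ∘ h) (F (x ∘ h)) (F (y ∘ h)) ≤ γ * weightedSupDist v x y := by
      rw [← weightedSupDist_comp hsurj]; exact hF _ _
    refine le_trans (weightedSupDist_le_of_forall hv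
      (weightedSupDist_nonneg (fun i => (hv (h i)).le) _ _) fun j => ?_) hFxy
    rw [hG, hG]
    refine abs_div_sum_sub_div_sum_le (fun i _ => (hd i).le) (hfiber j) fun i hi => ?_
    rw [← (mem_filter.1 hi).2]
    exact abs_sub_le_weightedSupDist_mul (fun i => hv (h i)) _ _ i
  exact ⟨hcontr, existsUnique_fixedPoint_of_weightedSupDist_le hv hγ1 hcontr⟩

/-- If F is a γ-contraction in ‖·‖_v on ℝ^N, then x ↦ Π F(Φ x) is a
    γ-contraction on ℝ^M in ‖·‖_v, and has a unique fixed point. -/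
theorem stmt_4 {N M : Type*} [Fintype N] [Fintype M] [DecidableEq M] [Nonempty N]
    (h : N → M) (hsurj : Function.Surjective h)
    (d : N → ℝ) (hd : ∀ i, 0 < d i)
    (v : M → ℝ) (hv : ∀ j, 0 < v j)
    (γ : ℝ) (hγ0 : 0 ≤ γ) (hγ1 : γ < 1)
    (F : (N → ℝ) → (N → ℝ))
    (hF : ∀ x y : N → ℝ,
      (⨆ i, |F x i - F y i| / v (h i)) ≤ γ * ⨆ i, |x i - y i| / v (h i))
    (G : (M → ℝ) → (M → ℝ))
    (hG : ∀ x j, G x j =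
      (∑ i ∈ Finset.univ.filter (fun i => h i = j), d i * F (fun i => x (h i)) i) /
      (∑ i ∈ Finset.univ.filter (fun i => h i = j), d i)) :
    (∀ x y : M → ℝ, (⨆ j, |G x j - G y j| / v j) ≤ γ * ⨆ j, |x j - y j| / v j) ∧
    (∃! xstar : M → ℝ, G xstar = xstar) :=
  stmt_4_general h hsurj d hd v hv γ hγ1 F hF G hG
end

section
/- Consider the stochastic approximation iterates x(t) ∈ ℝ^M defined by x(0) = 0 and, at each step t, x_{h(i_t)}(t+1) = (1 - α_t) x_{h(i_t)}(t) + α_t (F_{i_t}(Φ x(t)) + w(t)) with all other coordinates unchanged, where α_t ∈ [0,1], |w(t)| ≤ w̄ almost surely, and F satisfies ‖F(z)‖_v ≤ γ‖z‖_v + C for all z ∈ ℝ^N with 0 ≤ γ < 1 and C = (1+γ)‖y*‖_v. Then for all t, ‖x(t)‖_v ≤ (1/(1-γ)) ((1+γ)‖y*‖_v + w̄/v̲) almost surely, where v̲ = inf_{j∈M} v_j > 0. -/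
/-!
With `B := ((1 + γ) ‖y*‖_v + w̄ / v̲) / (1 - γ)` we have `γ B + C + w̄ / v̲ = B`, so the
invariant `|x_j(t)| ≤ B v_j` for all `j` propagates: if it holds at time `t`, then
`‖Φ x(t)‖_v ≤ B`, hence the target `F_{i_t}(Φ x(t)) + w(t)` is bounded by
`(γ B + C) v_j + (w̄ / v̲) v_j = B v_j`, and the updated coordinate is a convex combination of
two numbers bounded by `B v_j`.
-/

section WeightedSupNorm

variable {ι : Type*} {x v : ι → ℝ} {B : ℝ}

lemma abs_le_mul_of_iSup_abs_div_le [Finite ι] (hv : ∀ j, 0 < v j)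
    (hB : (⨆ j, |x j| / v j) ≤ B) (j : ι) : |x j| ≤ B * v j :=
  (div_le_iff₀ (hv j)).1 <|
    (le_ciSup (f := fun j => |x j| / v j) (Finite.bddAbove_range _) j).trans hB

lemma iSup_abs_div_le_of_abs_le_mul (hv : ∀ j, 0 < v j) (hB : 0 ≤ B)
    (hx : ∀ j, |x j| ≤ B * v j) : (⨆ j, |x j| / v j) ≤ B :=
  Real.iSup_le (fun j => (div_le_iff₀ (hv j)).2 (hx j)) hB

lemma le_div_iInf_mul [Finite ι] (hv : ∀ j, 0 < v j) {c : ℝ} (hc : 0 ≤ c) (j : ι) :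
    c ≤ c / (⨅ k, v k) * v j := by
  have : Nonempty ι := ⟨j⟩
  obtain ⟨k, hk⟩ := exists_eq_ciInf_of_finite (f := v)
  have hpos : 0 < ⨅ k, v k := hk ▸ hv k
  rw [div_mul_eq_mul_div, le_div_iff₀ hpos]
  exact mul_le_mul_of_nonneg_left (ciInf_le (Finite.bddBelow_range v) j) hc

end WeightedSupNorm

lemma abs_convex_comb_le {α a b r : ℝ} (hα : α ∈ Set.Icc (0 : ℝ) 1) (ha : |a| ≤ r)
    (hb : |b| ≤ r) : |(1 - α) * a + α * b| ≤ r := by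
  obtain ⟨hα0, hα1⟩ := hα
  calc |(1 - α) * a + α * b| ≤ (1 - α) * |a| + α * |b| := by
        refine (abs_add_le _ _).trans_eq ?_
        rw [abs_mul, abs_mul, abs_of_nonneg (sub_nonneg.2 hα1), abs_of_nonneg hα0]
    _ ≤ (1 - α) * r + α * r := by gcongr
    _ = r := by ring

theorem stmt_6_general {N M : Type*} [Fintype N] [Fintype M] [DecidableEq M]
    (h : N → M)
    (v : M → ℝ) (hv : ∀ j, 0 < v j)
    (γ : ℝ) (hγ0 : 0 ≤ γ) (hγ1 : γ < 1)
    (F : (N → ℝ) → (N → ℝ)) (ystar : N → ℝ) (C : ℝ)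
    (hC : C = (1 + γ) * ⨆ i, |ystar i| / v (h i))
    (hF : ∀ z : N → ℝ, (⨆ i, |F z i| / v (h i)) ≤ γ * (⨆ i, |z i| / v (h i)) + C)
    (α : ℕ → ℝ) (hα : ∀ t, α t ∈ Set.Icc (0:ℝ) 1)
    (w : ℕ → ℝ) (wbar : ℝ) (hw : ∀ t, |w t| ≤ wbar)
    (i : ℕ → N)
    (x : ℕ → M → ℝ) (hx0 : x 0 = 0)
    (hupd : ∀ t j, x (t+1) j =
      if j = h (i t) then
        (1 - α t) * x t j + α t * (F (fun i' => x t (h i')) (i t) + w t)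
      else x t j) :
    ∀ t, (⨆ j, |x t j| / v j) ≤
      (1 / (1 - γ)) * ((1 + γ) * (⨆ i', |ystar i'| / v (h i')) + wbar / ⨅ j, v j) := by
  set B := (1 / (1 - γ)) * ((1 + γ) * (⨆ i', |ystar i'| / v (h i')) + wbar / ⨅ j, v j)
  have hwbar : 0 ≤ wbar := (abs_nonneg _).trans (hw 0)
  have hB0 : 0 ≤ B := by
    have := Real.iSup_nonneg fun i' => div_nonneg (abs_nonneg (ystar i')) (hv (h i')).le
    have := Real.iInf_nonneg fun j => (hv j).le
    have : 0 < 1 - γ := by linarith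
    positivity
  have hfix : γ * B + C + wbar / (⨅ j, v j) = B := by
    have : 1 - γ ≠ 0 := by linarith
    simp only [B, hC]; field_simp; ring
  suffices hinv : ∀ t j, |x t j| ≤ B * v j from
    fun t => iSup_abs_div_le_of_abs_le_mul hv hB0 (hinv t)
  intro t
  induction t with
  | zero => simpa [hx0] using fun j => mul_nonneg hB0 (hv j).le
  | succ t ih =>
    set z := fun i' => x t (h i')
    have hz : (⨆ i', |z i'| / v (h i')) ≤ B :=
      iSup_abs_div_le_of_abs_le_mul (fun _ => hv _) hB0 fun i' => ih (h i')
    have hFz : (⨆ i', |F z i'| / v (h i')) ≤ γ * B + C := by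
      linarith [hF z, mul_le_mul_of_nonneg_left hz hγ0]
    have htarget : |F z (i t) + w t| ≤ B * v (h (i t)) :=
      calc |F z (i t) + w t| ≤ |F z (i t)| + |w t| := abs_add_le _ _
        _ ≤ (γ * B + C) * v (h (i t)) + wbar / (⨅ j, v j) * v (h (i t)) :=
          add_le_add (abs_le_mul_of_iSup_abs_div_le (v := fun i' => v (h i')) (fun _ => hv _) hFz _)
            ((hw t).trans (le_div_iInf_mul hv hwbar _))
        _ = B * v (h (i t)) := by linear_combination v (h (i t)) * hfix
    intro j
    rw [hupd]
    split_ifs with hj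
    · subst hj
      exact abs_convex_comb_le (hα t) (ih _) htarget
    · exact ih j

/-- The stochastic approximation iterates with state aggregation,
    starting from x(0) = 0, remain bounded:
    ‖x(t)‖_v ≤ (1/(1-γ)) ((1+γ)‖y*‖_v + w̄/v̲) for all t. -/
theorem stmt_6 {N M : Type*} [Fintype N] [Fintype M] [DecidableEq M] [Nonempty N]
    (h : N → M) (hsurj : Function.Surjective h)
    (v : M → ℝ) (hv : ∀ j, 0 < v j)
    (γ : ℝ) (hγ0 : 0 ≤ γ) (hγ1 : γ < 1)
    (F : (N → ℝ) → (N → ℝ)) (ystar : N → ℝ) (C : ℝ)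
    (hC : C = (1 + γ) * ⨆ i, |ystar i| / v (h i))
    (hF : ∀ z : N → ℝ, (⨆ i, |F z i| / v (h i)) ≤ γ * (⨆ i, |z i| / v (h i)) + C)
    (α : ℕ → ℝ) (hα : ∀ t, α t ∈ Set.Icc (0:ℝ) 1)
    (w : ℕ → ℝ) (wbar : ℝ) (hw : ∀ t, |w t| ≤ wbar)
    (i : ℕ → N)
    (x : ℕ → M → ℝ) (hx0 : x 0 = 0)
    (hupd : ∀ t j, x (t+1) j =
      if j = h (i t) then
        (1 - α t) * x t j + α t * (F (fun i' => x t (h i')) (i t) + w t)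
      else x t j) :
    ∀ t, (⨆ j, |x t j| / v j) ≤
      (1 / (1 - γ)) * ((1 + γ) * (⨆ i', |ystar i'| / v (h i')) + wbar / ⨅ j, v j) :=
  stmt_6_general h v hv γ hγ0 hγ1 F ystar C hC hF α hα w wbar hw i x hx0 hupd
end

section
/- Let θ* ∈ ℝ^M be the fixed point of Π T^{(λ)}(Φ ·), where T^{(λ)} is the λ-averaged Bellman operator of a finite Markov chain with discount γ ∈ [0,1) and λ ∈ [0,1), with value function V* (the fixed point of T^{(λ)}). Then ‖Φ θ* - V*‖_∞ ≤ ((1 - λγ)/(1 - γ)) ‖Φ Π V* - V*‖_∞. In particular, if h aggregates only states whose values differ by at most ζ, then ‖Φ θ* - V*‖_∞ ≤ (1 - λγ)ζ/(1 - γ). -/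
/-!
Write `A = ‖Φθ* - V*‖_∞` and `B = ‖ΦΠV* - V*‖_∞`. Since `θ* = Π T(Φθ*)` and `V* = T V*`, the
triangle inequality through `ΦΠV*` gives `A ≤ ‖ΦΠ(T(Φθ*) - T V*)‖_∞ + B`. Fiber averages are
nonexpansive in the sup norm, so with `c = γ(1-λ)/(1-γλ)` this is `A ≤ c A + B`, whence
`A ≤ B / (1 - c) = (1-λγ)/(1-γ) · B`. Finally, the average of `V*` over a fiber lies within `ζ`
of each value of `V*` on it, so `B ≤ ζ`.
-/

open Finset

lemma abs_wavg_sub_wavg_le {ι : Type*} {s : Finset ι} {w f g : ι → ℝ} {C : ℝ}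
    (hw : ∀ i ∈ s, 0 ≤ w i) (hs : 0 < ∑ i ∈ s, w i) (hC : ∀ i ∈ s, |f i - g i| ≤ C) :
    |(∑ i ∈ s, w i * f i) / (∑ i ∈ s, w i) - (∑ i ∈ s, w i * g i) / (∑ i ∈ s, w i)| ≤ C := by
  rw [div_sub_div_same, ← sum_sub_distrib, abs_div, abs_of_pos hs, div_le_iff₀ hs, mul_sum]
  calc |∑ i ∈ s, (w i * f i - w i * g i)|
      ≤ ∑ i ∈ s, |w i * f i - w i * g i| := abs_sum_le_sum_abs _ _
    _ ≤ ∑ i ∈ s, C * w i := sum_le_sum fun i hi => by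
        rw [← mul_sub, abs_mul, abs_of_nonneg (hw i hi), mul_comm]
        exact mul_le_mul_of_nonneg_right (hC i hi) (hw i hi)

lemma wavg_const {ι : Type*} {s : Finset ι} {w : ι → ℝ} (hs : ∑ i ∈ s, w i ≠ 0) (c : ℝ) :
    (∑ i ∈ s, w i * c) / (∑ i ∈ s, w i) = c := by
  rw [← sum_mul, mul_div_cancel_left₀ _ hs]

section Aggregation

variable {N M : Type*} [Fintype N] [DecidableEq M] {h : N → M} {d : N → ℝ}
  {Pi' : (N → ℝ) → (M → ℝ)}

lemma sum_fiber_pos (hd : ∀ i, 0 < d i) (i : N) :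
    0 < ∑ k ∈ univ.filter (fun k => h k = h i), d k :=
  sum_pos (fun k _ => hd k) ⟨i, by simp⟩

variable (hPi : ∀ V j, Pi' V j =
    (∑ i ∈ univ.filter (fun i => h i = j), d i * V i) /
    (∑ i ∈ univ.filter (fun i => h i = j), d i))
include hPi

lemma abs_proj_sub_proj_le (hd : ∀ i, 0 < d i) {V W : N → ℝ} {C : ℝ} (i : N)
    (hC : ∀ k, h k = h i → |V k - W k| ≤ C) :
    |Pi' V (h i) - Pi' W (h i)| ≤ C := by
  rw [hPi, hPi]
  exact abs_wavg_sub_wavg_le (fun k _ => (hd k).le) (sum_fiber_pos hd i)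
    fun k hk => hC k (mem_filter.mp hk).2

lemma abs_proj_sub_le_of_fiber (hd : ∀ i, 0 < d i) {V : N → ℝ} {ζ : ℝ} (i : N)
    (hζ : ∀ k, h k = h i → |V k - V i| ≤ ζ) :
    |Pi' V (h i) - V i| ≤ ζ := by
  have hconst : Pi' (fun _ => V i) (h i) = V i := by
    rw [hPi, wavg_const (sum_fiber_pos hd i).ne']
  simpa only [hconst] using abs_proj_sub_proj_le hPi hd i hζ

end Aggregation

lemma abs_sub_le_iSup_abs_sub {ι : Type*} [Finite ι] (V W : ι → ℝ) (i : ι) :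
    |V i - W i| ≤ ⨆ k, |V k - W k| :=
  le_ciSup (f := fun k => |V k - W k|) (Finite.bddAbove_range _) i

lemma le_div_one_sub_of_le_mul_add {A B c : ℝ} (hc : c < 1) (hA : A ≤ c * A + B) :
    A ≤ B / (1 - c) := by
  rw [le_div_iff₀ (by linarith)]
  linarith

theorem stmt_11_general {N M : Type*} [Fintype N] [DecidableEq M] [Nonempty N]
    (h : N → M)
    (d : N → ℝ) (hd : ∀ i, 0 < d i)
    (γ lam : ℝ) (hγ0 : 0 ≤ γ) (hγ1 : γ < 1) (hlam1 : lam < 1)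
    (T : (N → ℝ) → (N → ℝ))
    (hT : ∀ V W : N → ℝ,
      (⨆ i, |T V i - T W i|) ≤ (γ * (1 - lam) / (1 - γ * lam)) * ⨆ i, |V i - W i|)
    (Vstar : N → ℝ) (hVfix : T Vstar = Vstar)
    (Pi' : (N → ℝ) → (M → ℝ))
    (hPi : ∀ V j, Pi' V j =
      (∑ i ∈ Finset.univ.filter (fun i => h i = j), d i * V i) /
      (∑ i ∈ Finset.univ.filter (fun i => h i = j), d i))
    (θstar : M → ℝ) (hθ : Pi' (T (fun i => θstar (h i))) = θstar)
    (ζ : ℝ) (hζ : ∀ i i', h i = h i' → |Vstar i - Vstar i'| ≤ ζ) :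
    ((⨆ i, |θstar (h i) - Vstar i|) ≤
      ((1 - lam * γ) / (1 - γ)) * (⨆ i, |Pi' Vstar (h i) - Vstar i|)) ∧
    ((⨆ i, |θstar (h i) - Vstar i|) ≤ (1 - lam * γ) * ζ / (1 - γ)) := by
  set c := γ * (1 - lam) / (1 - γ * lam)
  set A := ⨆ i, |θstar (h i) - Vstar i|
  set B := ⨆ i, |Pi' Vstar (h i) - Vstar i|
  have hγlam : γ * lam < 1 := (mul_le_of_le_one_right hγ0 hlam1.le).trans_lt hγ1
  have hc : c < 1 := by rw [div_lt_one (by linarith)]; linarith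
  have hTθ : ∀ k, |T (fun i => θstar (h i)) k - T Vstar k| ≤ c * A := fun k =>
    (abs_sub_le_iSup_abs_sub _ _ k).trans (hT _ Vstar)
  have hAB : A ≤ c * A + B := ciSup_le fun i => by
    calc |θstar (h i) - Vstar i|
        ≤ |θstar (h i) - Pi' Vstar (h i)| + |Pi' Vstar (h i) - Vstar i| := abs_sub_le _ _ _
      _ ≤ c * A + B := by
        gcongr
        · simpa only [hθ, hVfix] using abs_proj_sub_proj_le hPi hd i fun k _ => hTθ k
        · exact abs_sub_le_iSup_abs_sub (fun i => Pi' Vstar (h i)) Vstar i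
  have hBζ : B ≤ ζ := ciSup_le fun i => abs_proj_sub_le_of_fiber hPi hd i fun k hk => hζ k i hk
  have hA : A ≤ (1 - lam * γ) / (1 - γ) * B := by
    have h1c : 1 - c = (1 - γ) / (1 - lam * γ) := by
      rw [mul_comm lam, eq_div_iff (by linarith), sub_mul, div_mul_cancel₀ _ (by linarith)]
      ring
    convert le_div_one_sub_of_le_mul_add hc hAB using 1
    rw [h1c, div_div_eq_mul_div]
    ring
  refine ⟨hA, hA.trans ?_⟩
  calc (1 - lam * γ) / (1 - γ) * B ≤ (1 - lam * γ) / (1 - γ) * ζ := by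
        gcongr
        exact div_nonneg (by linarith) (by linarith)
    _ = (1 - lam * γ) * ζ / (1 - γ) := by ring

/-- For θ* the fixed point of Π T^{(λ)}(Φ ·), where T^{(λ)} is a
    (γ(1-λ)/(1-γλ))-contraction in ‖·‖_∞ with fixed point V*, we have
    ‖Φθ* - V*‖_∞ ≤ ((1-λγ)/(1-γ)) ‖ΦΠV* - V*‖_∞; in particular, if aggregated
    states have values within ζ, then ‖Φθ* - V*‖_∞ ≤ (1-λγ)ζ/(1-γ). -/
theorem stmt_11 {N M : Type*} [Fintype N] [Fintype M] [DecidableEq M] [Nonempty N]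
    (h : N → M) (hsurj : Function.Surjective h)
    (d : N → ℝ) (hd : ∀ i, 0 < d i) (hdsum : ∑ i, d i = 1)
    (γ lam : ℝ) (hγ0 : 0 ≤ γ) (hγ1 : γ < 1) (hlam0 : 0 ≤ lam) (hlam1 : lam < 1)
    (T : (N → ℝ) → (N → ℝ))
    (hT : ∀ V W : N → ℝ,
      (⨆ i, |T V i - T W i|) ≤ (γ * (1 - lam) / (1 - γ * lam)) * ⨆ i, |V i - W i|)
    (Vstar : N → ℝ) (hVfix : T Vstar = Vstar)
    (Pi' : (N → ℝ) → (M → ℝ))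
    (hPi : ∀ V j, Pi' V j =
      (∑ i ∈ Finset.univ.filter (fun i => h i = j), d i * V i) /
      (∑ i ∈ Finset.univ.filter (fun i => h i = j), d i))
    (θstar : M → ℝ) (hθ : Pi' (T (fun i => θstar (h i))) = θstar)
    (ζ : ℝ) (hζ : ∀ i i', h i = h i' → |Vstar i - Vstar i'| ≤ ζ) :
    ((⨆ i, |θstar (h i) - Vstar i|) ≤
      ((1 - lam * γ) / (1 - γ)) * (⨆ i, |Pi' Vstar (h i) - Vstar i|)) ∧
    ((⨆ i, |θstar (h i) - Vstar i|) ≤ (1 - lam * γ) * ζ / (1 - γ)) :=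
  stmt_11_general h d hd γ lam hγ0 hγ1 hlam1 T hT Vstar hVfix Pi' hPi θstar hθ ζ hζ
end

section
/- Let α_t = H/(t + t_0) for t ≥ 0 with constants H > 0, σ' ∈ (0,1] satisfying Hσ' ≥ 2, and t_0 ≥ 4H. Define b_{k,t} = α_k d' ∏_{l=k+1}^{t} (1 - α_l d') for a constant d' with σ' ≤ d' ≤ 1, and β_{k,t} = α_k ∏_{l=k+1}^t (1 - α_l σ'). Then α_k ∏_{l=k+1}^t (1 - α_l d') ≤ H/(t + t_0) for all τ ≤ k ≤ t. -/
/-!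
Since `1 ≤ H d' ≤ l + t₀`, every factor satisfies `0 ≤ 1 - H d'/(l + t₀) ≤ 1 - 1/(l + t₀)`, and the
product of the latter telescopes: `∏_{l=k+1}^t (1 - 1/(l + t₀)) = (k + t₀)/(t + t₀)`. Multiplying by
`α_k = H/(k + t₀)` gives `H/(t + t₀)`.
-/

open Finset

theorem prod_Icc_one_sub_inv_add {t0 : ℝ} {k t : ℕ} (hk : 0 < k + t0) (hkt : k ≤ t) :
    ∏ l ∈ Icc (k + 1) t, (1 - 1 / ((l : ℝ) + t0)) = (k + t0) / (t + t0) := by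
  induction t, hkt using Nat.le_induction with
  | base => simp [hk.ne']
  | succ t hkt ih =>
    have ht : 0 < (t : ℝ) + t0 := by linarith [(Nat.cast_le (α := ℝ)).2 hkt]
    have ht1 : (t : ℝ) + 1 + t0 ≠ 0 := by linarith
    rw [prod_Icc_succ_top (by omega), ih]
    push_cast
    field_simp
    ring

theorem prod_Icc_one_sub_div_le {t0 c : ℝ} {k t : ℕ} (hk : 0 < k + t0) (hkt : k ≤ t)
    (hc : 1 ≤ c) (hck : c ≤ k + 1 + t0) :
    ∏ l ∈ Icc (k + 1) t, (1 - c / ((l : ℝ) + t0)) ≤ (k + t0) / (t + t0) := by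
  have hcl : ∀ l ∈ Icc (k + 1) t, c ≤ (l : ℝ) + t0 := fun l hl => by
    have : (k : ℝ) + 1 ≤ l := by exact_mod_cast (mem_Icc.1 hl).1
    linarith
  rw [← prod_Icc_one_sub_inv_add hk hkt]
  refine prod_le_prod (fun l hl => ?_) (fun l hl => ?_)
  · exact sub_nonneg.2 (div_le_one_of_le₀ (hcl l hl) (by linarith [hcl l hl]))
  · have hcl := hcl l hl
    have : 0 < (l : ℝ) + t0 := by linarith
    gcongr

theorem stmt_12_general (H σ' t0 d' : ℝ)
    (hH : 0 < H) (hHσ : 2 ≤ H * σ')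
    (ht0 : 4 * H ≤ t0)
    (hd1 : σ' ≤ d') (hd2 : d' ≤ 1)
    (α : ℕ → ℝ) (hα : ∀ t : ℕ, α t = H / (t + t0))
    (k t : ℕ) (hkt : k ≤ t) :
    α k * ∏ l ∈ Finset.Icc (k + 1) t, (1 - α l * d') ≤ H / (t + t0) := by
  have hk0 : (0 : ℝ) ≤ k := k.cast_nonneg
  have hk : 0 < (k : ℝ) + t0 := by linarith
  have hHd : 1 ≤ H * d' := by nlinarith
  have hHdk : H * d' ≤ k + 1 + t0 := by nlinarith
  have hfactor : ∀ l : ℕ, 1 - α l * d' = 1 - H * d' / ((l : ℝ) + t0) := fun l => by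
    rw [hα, div_mul_eq_mul_div]
  calc α k * ∏ l ∈ Icc (k + 1) t, (1 - α l * d')
      ≤ H / (k + t0) * ((k + t0) / (t + t0)) := by
        simp only [hfactor, hα k]
        gcongr
        exact prod_Icc_one_sub_div_le hk hkt hHd hHdk
    _ = H / (t + t0) := by field_simp

/-- With step sizes α_t = H/(t+t₀), Hσ' ≥ 2, t₀ ≥ 4H and
    σ' ≤ d' ≤ 1, one has α_k ∏_{l=k+1}^t (1 - α_l d') ≤ H/(t + t₀) for τ ≤ k ≤ t. -/
theorem stmt_12 (H σ' t0 d' : ℝ)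
    (hH : 0 < H) (hσ0 : 0 < σ') (hσ1 : σ' ≤ 1) (hHσ : 2 ≤ H * σ')
    (ht0 : 4 * H ≤ t0)
    (hd1 : σ' ≤ d') (hd2 : d' ≤ 1)
    (α : ℕ → ℝ) (hα : ∀ t : ℕ, α t = H / (t + t0))
    (τ k t : ℕ) (hτk : τ ≤ k) (hkt : k ≤ t) :
    α k * ∏ l ∈ Finset.Icc (k + 1) t, (1 - α l * d') ≤ H / (t + t0) :=
  stmt_12_general H σ' t0 d' hH hHσ ht0 hd1 hd2 α hα k t hkt
end

section
/- Suppose σ' H (1 - √γ) ≥ 1, t_0 ≥ 1, α_t = H/(t + t_0) with α_0 ≤ 1/2, and d' ∈ [σ', 1]. Define b_{k,t} = α_k d' ∏_{l=k+1}^t (1 - α_l d'). Then for every exponent ω with 0 < ω ≤ 1 and every t ≥ τ, ∑_{k=τ}^t b_{k,t} · (k + t_0)^{-ω} ≤ (1/√γ) (t + 1 + t_0)^{-ω}. -/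
/-! With `a_k = α_k d'`, the weighted sum `e_t = ∑_{k=τ}^t b_{k,t} (k + t₀)^{-ω}` satisfies
`e_{t+1} = (1 - a_{t+1}) e_t + a_{t+1} s^{-ω}` with `s = t + 1 + t₀`. Inductively
`e_t ≤ γ^{-1/2} s^{-ω}`, so
`e_{t+1} ≤ γ^{-1/2} (1 - a_{t+1}(1 - √γ)) s^{-ω}`, and the hypothesis `σ' H (1 - √γ) ≥ 1` gives
`a_{t+1}(1 - √γ) ≥ 1/s`, whence `1 - a_{t+1}(1 - √γ) ≤ s/(s+1) ≤ ((s+1)/s)^{-ω}` for `ω ≤ 1`. -/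

open Finset

def discountedSum (a f : ℕ → ℝ) (τ t : ℕ) : ℝ :=
  ∑ k ∈ Icc τ t, (a k * ∏ l ∈ Icc (k + 1) t, (1 - a l)) * f k

namespace discountedSum

variable (a f : ℕ → ℝ) {τ t : ℕ}

theorem self : discountedSum a f τ τ = a τ * f τ := by
  simp [discountedSum]

theorem succ (hτ : τ ≤ t + 1) :
    discountedSum a f τ (t + 1) = (1 - a (t + 1)) * discountedSum a f τ t + a (t + 1) * f (t + 1) := by
  rw [discountedSum, sum_Icc_succ_top hτ, Icc_eq_empty_of_lt (lt_add_one (t + 1)), prod_empty, mul_one,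
    discountedSum, mul_sum]
  congr 1
  refine sum_congr rfl fun k hk => ?_
  rw [prod_Icc_succ_top (by grind)]
  ring

theorem le_of_step {B : ℕ → ℝ} (ha : ∀ n, a n ≤ 1) (hbase : a τ * f τ ≤ B τ)
    (hstep : ∀ t, τ ≤ t → (1 - a (t + 1)) * B t + a (t + 1) * f (t + 1) ≤ B (t + 1))
    (hτt : τ ≤ t) : discountedSum a f τ t ≤ B t := by
  induction t, hτt using Nat.le_induction with
  | base => rwa [self]
  | succ t hτt ih =>
    rw [succ a f (by omega)]
    calc (1 - a (t + 1)) * discountedSum a f τ t + a (t + 1) * f (t + 1)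
        ≤ (1 - a (t + 1)) * B t + a (t + 1) * f (t + 1) := by
          gcongr
          linarith [ha (t + 1)]
      _ ≤ B (t + 1) := hstep t hτt

end discountedSum

theorem mul_rpow_neg_le_mul_rpow_neg {x y ω : ℝ} (hx : 0 < x) (hxy : x ≤ y) (hω : ω ≤ 1) :
    x * x ^ (-ω) ≤ y * y ^ (-ω) := by
  have hy : 0 < y := hx.trans_le hxy
  have hself {z : ℝ} (hz : 0 < z) : z * z ^ (-ω) = z ^ (1 - ω) := by
    rw [sub_eq_add_neg, Real.rpow_add hz, Real.rpow_one]
  rw [hself hx, hself hy]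
  exact Real.rpow_le_rpow hx.le hxy (by linarith)

theorem mul_rpow_neg_le_rpow_neg_add_one {x c ω : ℝ} (hx : 0 < x) (hω : ω ≤ 1)
    (hc : c ≤ x / (x + 1)) : c * x ^ (-ω) ≤ (x + 1) ^ (-ω) := by
  have hx1 : 0 < x + 1 := by linarith
  calc c * x ^ (-ω) ≤ x / (x + 1) * x ^ (-ω) := mul_le_mul_of_nonneg_right hc (by positivity)
    _ = x * x ^ (-ω) / (x + 1) := by ring
    _ ≤ (x + 1) * (x + 1) ^ (-ω) / (x + 1) :=
        div_le_div_of_nonneg_right (mul_rpow_neg_le_mul_rpow_neg hx (by linarith) hω) hx1.le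
    _ = (x + 1) ^ (-ω) := by field_simp

theorem one_sub_mul_add_le_one_div_mul_rpow_neg {a r s ω : ℝ} (hr : 0 < r) (hs : 0 < s)
    (hω : ω ≤ 1) (has : 1 ≤ a * (1 - r) * s) :
    (1 - a) * (1 / r * s ^ (-ω)) + a * s ^ (-ω) ≤ 1 / r * (s + 1) ^ (-ω) := by
  have hcontract : 1 - a * (1 - r) ≤ s / (s + 1) := by
    rw [le_div_iff₀ (by linarith)]
    nlinarith
  calc (1 - a) * (1 / r * s ^ (-ω)) + a * s ^ (-ω) = 1 / r * ((1 - a * (1 - r)) * s ^ (-ω)) := by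
        field_simp
        ring
    _ ≤ 1 / r * (s + 1) ^ (-ω) := by
        gcongr
        exact mul_rpow_neg_le_rpow_neg_add_one hs hω hcontract

theorem stmt_13_general (γ H σ' t0 d' ω : ℝ)
    (hγ0 : 0 < γ) (hγ1 : γ < 1)
    (hH : 0 < H) (hσ : 0 < σ') (ht0 : 1 ≤ t0)
    (hcond : 1 ≤ σ' * H * (1 - Real.sqrt γ))
    (α : ℕ → ℝ) (hα : ∀ t : ℕ, α t = H / (t + t0)) (hα0 : α 0 ≤ 1 / 2)
    (hd1 : σ' ≤ d') (hd2 : d' ≤ 1)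
    (hω1 : ω ≤ 1)
    (τ t : ℕ) (hτt : τ ≤ t) :
    ∑ k ∈ Finset.Icc τ t,
        (α k * d' * ∏ l ∈ Finset.Icc (k + 1) t, (1 - α l * d')) * ((k : ℝ) + t0) ^ (-ω)
      ≤ (1 / Real.sqrt γ) * ((t : ℝ) + 1 + t0) ^ (-ω) := by
  have hr : 0 < Real.sqrt γ := Real.sqrt_pos.mpr hγ0
  have hr1 : Real.sqrt γ < 1 := by simpa using Real.sqrt_lt_sqrt hγ0.le hγ1
  have hpos (n : ℕ) : 0 < (n : ℝ) + t0 := by positivity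
  have ha (n : ℕ) : α n * d' ≤ 1 / 2 := by
    have hαn : α n ≤ α 0 := by
      rw [hα, hα]
      gcongr
      simp
    have : 0 ≤ α n := by rw [hα]; exact (div_pos hH (hpos n)).le
    nlinarith
  refine discountedSum.le_of_step (fun n => α n * d') (fun k => ((k : ℝ) + t0) ^ (-ω))
    (B := fun t => 1 / Real.sqrt γ * ((t : ℝ) + 1 + t0) ^ (-ω))
    (fun n => (ha n).trans (by norm_num)) ?_ (fun t _ => ?_) hτt
  · calc α τ * d' * ((τ : ℝ) + t0) ^ (-ω) ≤ ((τ : ℝ) + t0 + 1) ^ (-ω) :=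
          mul_rpow_neg_le_rpow_neg_add_one (hpos τ) hω1 <| (ha τ).trans <| by
            rw [le_div_iff₀ (by linarith [hpos τ])]; linarith
      _ ≤ 1 / Real.sqrt γ * ((τ : ℝ) + 1 + t0) ^ (-ω) := by
          rw [add_right_comm]
          exact le_mul_of_one_le_left (by positivity) (one_le_one_div hr hr1.le)
  · have hs : ((t + 1 : ℕ) : ℝ) + t0 = (t : ℝ) + 1 + t0 := by push_cast; ring
    have hs' : ((t + 1 : ℕ) : ℝ) + 1 + t0 = (t : ℝ) + 1 + t0 + 1 := by push_cast; ring
    simp only [hs, hs', hα]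
    refine one_sub_mul_add_le_one_div_mul_rpow_neg hr (hs ▸ hpos (t + 1)) hω1 ?_
    rw [div_mul_eq_mul_div, div_mul_eq_mul_div, div_mul_cancel₀ _ (hs ▸ hpos (t + 1)).ne']
    nlinarith [mul_le_mul_of_nonneg_right hd1 (mul_nonneg hH.le (sub_nonneg.2 hr1.le))]

/-- With σ'H(1-√γ) ≥ 1, t₀ ≥ 1, α_t = H/(t+t₀), α₀ ≤ 1/2,
    d' ∈ [σ',1], and 0 < ω ≤ 1:
    ∑_{k=τ}^t b_{k,t} (k+t₀)^{-ω} ≤ (1/√γ)(t+1+t₀)^{-ω}. -/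
theorem stmt_13 (γ H σ' t0 d' ω : ℝ)
    (hγ0 : 0 < γ) (hγ1 : γ < 1)
    (hH : 0 < H) (hσ : 0 < σ') (ht0 : 1 ≤ t0)
    (hcond : 1 ≤ σ' * H * (1 - Real.sqrt γ))
    (α : ℕ → ℝ) (hα : ∀ t : ℕ, α t = H / (t + t0)) (hα0 : α 0 ≤ 1 / 2)
    (hd1 : σ' ≤ d') (hd2 : d' ≤ 1)
    (hω0 : 0 < ω) (hω1 : ω ≤ 1)
    (τ t : ℕ) (hτt : τ ≤ t) :
    ∑ k ∈ Finset.Icc τ t,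
        (α k * d' * ∏ l ∈ Finset.Icc (k + 1) t, (1 - α l * d')) * ((k : ℝ) + t0) ^ (-ω)
      ≤ (1 / Real.sqrt γ) * ((t : ℝ) + 1 + t0) ^ (-ω) :=
  stmt_13_general γ H σ' t0 d' ω hγ0 hγ1 hH hσ ht0 hcond α hα hα0 hd1 hd2 hω1 τ t hτt
end

section
/- Consider Q-learning with state-action aggregation: let M = (S, A, P, R, γ) be a finite MDP with optimal Q-function Q*, h a surjection from S×A onto an abstract set 𝓜, and suppose there exists q : 𝓜 → ℝ with ‖Φq − Q*‖_∞ ≤ ε (approximate Q*-irrelevance). Let d be a strictly positive probability vector on S×A, Π = (ΦᵀDΦ)^{-1}ΦᵀD, F the Bellman optimality operator F_{s,a}(Q) = R_{s,a} + γ E_{s'∼P(·|s,a)} max_{a'} Q_{s',a'}, and θ* the unique fixed point of Π F(Φ ·). Then ‖Φ θ* − Q*‖_∞ ≤ 2ε/(1 − γ). -/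
/-!
Write `Δ = ‖Φθ* − Q*‖_∞`. On each aggregation block `h⁻¹(m)` the projection `Π` is a
`d`-weighted mean, so it moves no value further from `q m` than the farthest input. Since the
Bellman operator `F` is a `γ`-contraction fixing `Q*`, every input `F(Φθ*)(s', a')` is within
`γΔ` of `Q*(s', a')`, hence within `γΔ + ε` of `q m`; so `θ*(m)` is too, and `Φθ*` is within
`γΔ + 2ε` of `Q*`. Taking the supremum, `Δ ≤ γΔ + 2ε`.
-/

open Finset

lemma abs_sum_mul_div_sum_sub_le {ι : Type*} (t : Finset ι) (w x : ι → ℝ) (y c : ℝ)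
    (hw : ∀ i ∈ t, 0 ≤ w i) (hw_pos : 0 < ∑ i ∈ t, w i) (hx : ∀ i ∈ t, |x i - y| ≤ c) :
    |(∑ i ∈ t, w i * x i) / (∑ i ∈ t, w i) - y| ≤ c := by
  have hmem := (convex_closedBall y c).centerMass_mem hw hw_pos
    (fun i hi => Metric.mem_closedBall.2 ((Real.dist_eq _ _).trans_le (hx i hi)))
  rw [Metric.mem_closedBall, Real.dist_eq] at hmem
  simpa only [centerMass, smul_eq_mul, inv_mul_eq_div] using hmem

lemma iSup_le_iSup_add_norm_sub {ι : Type*} [Fintype ι] [Nonempty ι] (f g : ι → ℝ) :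
    ⨆ i, f i ≤ (⨆ i, g i) + ‖f - g‖ := by
  refine ciSup_le fun i => ?_
  have hfg : f i - g i ≤ ‖f - g‖ := (le_abs_self _).trans (norm_le_pi_norm (f - g) i)
  have hg : g i ≤ ⨆ i, g i := le_ciSup (Set.finite_range g).bddAbove i
  linarith

lemma abs_iSup_sub_iSup_le_norm_sub {ι : Type*} [Fintype ι] (f g : ι → ℝ) :
    |(⨆ i, f i) - ⨆ i, g i| ≤ ‖f - g‖ := by
  cases isEmpty_or_nonempty ι
  · simp
  · have hfg := iSup_le_iSup_add_norm_sub f g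
    have hgf := iSup_le_iSup_add_norm_sub g f
    rw [norm_sub_rev] at hgf
    exact abs_sub_le_iff.2 ⟨by linarith, by linarith⟩

section Bellman

variable {S A : Type*} [Fintype S] [Fintype A]

lemma abs_apply_apply_le_norm (Q : S → A → ℝ) (s : S) (a : A) : |Q s a| ≤ ‖Q‖ :=
  (norm_le_pi_norm (Q s) a).trans (norm_le_pi_norm Q s)

lemma norm_le_of_forall_abs_apply_apply_le {Q : S → A → ℝ} {c : ℝ} (hc : 0 ≤ c)
    (hQ : ∀ s a, |Q s a| ≤ c) : ‖Q‖ ≤ c :=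
  (pi_norm_le_iff_of_nonneg hc).2 fun s => (pi_norm_le_iff_of_nonneg hc).2 (hQ s)

noncomputable def bellmanOptimalityOp (P : S → A → S → ℝ) (R : S → A → ℝ) (γ : ℝ)
    (Q : S → A → ℝ) : S → A → ℝ :=
  fun s a => R s a + γ * ∑ s', P s a s' * ⨆ a', Q s' a'

lemma norm_bellmanOptimalityOp_sub_le {P : S → A → S → ℝ} (hP0 : ∀ s a s', 0 ≤ P s a s')
    (hP1 : ∀ s a, ∑ s', P s a s' = 1) (R : S → A → ℝ) {γ : ℝ} (hγ : 0 ≤ γ)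
    (Q Q' : S → A → ℝ) :
    ‖bellmanOptimalityOp P R γ Q - bellmanOptimalityOp P R γ Q'‖ ≤ γ * ‖Q - Q'‖ := by
  refine norm_le_of_forall_abs_apply_apply_le (by positivity) fun s a => ?_
  have hmean : |(∑ s', P s a s' * ((⨆ a', Q s' a') - ⨆ a', Q' s' a')) / ∑ s', P s a s' - 0|
      ≤ ‖Q - Q'‖ :=
    abs_sum_mul_div_sum_sub_le _ _ _ _ _ (fun s' _ => hP0 s a s') (by rw [hP1]; exact one_pos)
      fun s' _ => by
        rw [sub_zero]
        exact (abs_iSup_sub_iSup_le_norm_sub _ _).trans (norm_le_pi_norm (Q - Q') s')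
  rw [hP1, div_one, sub_zero] at hmean
  calc |(bellmanOptimalityOp P R γ Q - bellmanOptimalityOp P R γ Q') s a|
      = γ * |∑ s', P s a s' * ((⨆ a', Q s' a') - ⨆ a', Q' s' a')| := by
        simp only [Pi.sub_apply, bellmanOptimalityOp, add_sub_add_left_eq_sub, mul_sub,
          sum_sub_distrib]
        rw [← mul_sub, abs_mul, abs_of_nonneg hγ]
    _ ≤ γ * ‖Q - Q'‖ := mul_le_mul_of_nonneg_left hmean hγ

end Bellman

section Aggregation

variable {X 𝓜 : Type*} [Fintype X] [DecidableEq 𝓜]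

/-- `(ΦᵀDΦ)⁻¹ΦᵀD G` for the 0/1 feature matrix `Φ` of `h` and `D = diag d`. -/
noncomputable def blockAverage (h : X → 𝓜) (d G : X → ℝ) (m : 𝓜) : ℝ :=
  (∑ x ∈ univ.filter (fun x => h x = m), d x * G x) / ∑ x ∈ univ.filter (fun x => h x = m), d x

lemma abs_blockAverage_sub_le {h : X → 𝓜} {d : X → ℝ} (hd : ∀ x, 0 < d x) {G : X → ℝ}
    {q : 𝓜 → ℝ} {c : ℝ} (hG : ∀ x, |G x - q (h x)| ≤ c) (x : X) :
    |blockAverage h d G (h x) - q (h x)| ≤ c := by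
  have hx : x ∈ univ.filter (fun y => h y = h x) := by simp
  refine abs_sum_mul_div_sum_sub_le _ _ _ _ _ (fun y _ => (hd y).le)
    (sum_pos (fun y _ => hd y) ⟨x, hx⟩) fun y hy => ?_
  rw [← (mem_filter.1 hy).2]
  exact hG y

end Aggregation

theorem stmt_19_general {S A 𝓜 : Type*} [Fintype S] [Fintype A]
    [DecidableEq 𝓜]
    (P : S → A → S → ℝ) (hP0 : ∀ s a s', 0 ≤ P s a s')
    (hP1 : ∀ s a, ∑ s', P s a s' = 1)
    (R : S → A → ℝ) (γ : ℝ) (hγ0 : 0 ≤ γ) (hγ1 : γ < 1)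
    (F : (S → A → ℝ) → (S → A → ℝ))
    (hF : ∀ Q s a, F Q s a = R s a + γ * ∑ s', P s a s' * (⨆ a', Q s' a'))
    (Qstar : S → A → ℝ) (hQ : F Qstar = Qstar)
    (h : S × A → 𝓜)
    (q : 𝓜 → ℝ) (ε : ℝ) (hq : ∀ s a, |q (h (s, a)) - Qstar s a| ≤ ε)
    (d : S × A → ℝ) (hd : ∀ sa, 0 < d sa)
    (θstar : 𝓜 → ℝ)
    (hθ : ∀ m, θstar m =
      (∑ sa ∈ Finset.univ.filter (fun sa => h sa = m),
          d sa * F (fun s a => θstar (h (s, a))) sa.1 sa.2) /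
      (∑ sa ∈ Finset.univ.filter (fun sa => h sa = m), d sa)) :
    ∀ s a, |θstar (h (s, a)) - Qstar s a| ≤ 2 * ε / (1 - γ) := by
  obtain rfl : F = bellmanOptimalityOp P R γ := funext fun Q => funext fun s => funext (hF Q s)
  set Φθ : S → A → ℝ := fun s a => θstar (h (s, a))
  set Δ := ‖Φθ - Qstar‖
  have hcontr : ‖bellmanOptimalityOp P R γ Φθ - Qstar‖ ≤ γ * Δ := by
    simpa only [hQ] using norm_bellmanOptimalityOp_sub_le hP0 hP1 R hγ0 Φθ Qstar
  have hproj : ∀ s a, |θstar (h (s, a)) - q (h (s, a))| ≤ γ * Δ + ε := by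
    intro s a
    rw [hθ]
    refine abs_blockAverage_sub_le hd (fun ⟨s', a'⟩ => ?_) (s, a)
    calc _ ≤ |bellmanOptimalityOp P R γ Φθ s' a' - Qstar s' a'| + |Qstar s' a' - q (h (s', a'))| :=
          abs_sub_le _ _ _
      _ ≤ γ * Δ + ε :=
          add_le_add ((abs_apply_apply_le_norm (_ - Qstar) s' a').trans hcontr)
            (abs_sub_comm (q _) _ ▸ hq s' a')
  intro s a
  have hε : 0 ≤ ε := (abs_nonneg _).trans (hq s a)
  have hpoint : ∀ s a, |Φθ s a - Qstar s a| ≤ γ * Δ + 2 * ε := fun s a =>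
    (abs_sub_le _ (q (h (s, a))) _).trans (by linarith [hproj s a, hq s a])
  have hΔ : Δ ≤ γ * Δ + 2 * ε := norm_le_of_forall_abs_apply_apply_le (by positivity) hpoint
  calc |θstar (h (s, a)) - Qstar s a| ≤ Δ := abs_apply_apply_le_norm (Φθ - Qstar) s a
    _ ≤ 2 * ε / (1 - γ) := by rw [le_div_iff₀ (by linarith)]; linarith

/-- Q-learning with state–action aggregation. If there is an abstract
    q with ‖Φq − Q*‖_∞ ≤ ε, and θ* is the fixed point of Π F(Φ ·) for the Bellman
    optimality operator F and a positive stationary distribution d, then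
    ‖Φ θ* − Q*‖_∞ ≤ 2ε/(1 − γ). -/
theorem stmt_19 {S A 𝓜 : Type*} [Fintype S] [Fintype A] [Fintype 𝓜]
    [Nonempty S] [Nonempty A] [DecidableEq 𝓜]
    (P : S → A → S → ℝ) (hP0 : ∀ s a s', 0 ≤ P s a s')
    (hP1 : ∀ s a, ∑ s', P s a s' = 1)
    (R : S → A → ℝ) (γ : ℝ) (hγ0 : 0 ≤ γ) (hγ1 : γ < 1)
    (F : (S → A → ℝ) → (S → A → ℝ))
    (hF : ∀ Q s a, F Q s a = R s a + γ * ∑ s', P s a s' * (⨆ a', Q s' a'))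
    (Qstar : S → A → ℝ) (hQ : F Qstar = Qstar)
    (h : S × A → 𝓜) (hsurj : Function.Surjective h)
    (q : 𝓜 → ℝ) (ε : ℝ) (hq : ∀ s a, |q (h (s, a)) - Qstar s a| ≤ ε)
    (d : S × A → ℝ) (hd : ∀ sa, 0 < d sa) (hdsum : ∑ sa, d sa = 1)
    (θstar : 𝓜 → ℝ)
    (hθ : ∀ m, θstar m =
      (∑ sa ∈ Finset.univ.filter (fun sa => h sa = m),
          d sa * F (fun s a => θstar (h (s, a))) sa.1 sa.2) /
      (∑ sa ∈ Finset.univ.filter (fun sa => h sa = m), d sa)) :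
    ∀ s a, |θstar (h (s, a)) - Qstar s a| ≤ 2 * ε / (1 - γ) :=
  stmt_19_general P hP0 hP1 R γ hγ0 hγ1 F hF Qstar hQ h q ε hq d hd θstar hθ
end
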